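/- arXiv:2403.08371 — 4 statements merged into one kernel-verified Lean document; each statement's English description precedes it below -/
import Mathlib

section
/- A standard interference function has at most one fixed point: if F : ℝ_{≥0}^M → ℝ_{>0}^M is positive, monotone, and scalable componentwise, and λ = F(λ) and λ' = F(λ') with λ, λ' ≥ 0, then λ = λ'. -/
/-!
If `λ > 0` and `λ' ≥ 0` are fixed points, let `α = maxᵢ λ'ᵢ / λᵢ`, attained at `j`, so that
`λ' ≤ α λ`. Were `α > 1`, monotonicity and scalability would give
`λ'ⱼ = F(λ')ⱼ ≤ F(αλ)ⱼ < α F(λ)ⱼ = α λⱼ = λ'ⱼ`. Hence `λ' ≤ λ`; fixed points are positive,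
so the argument applies in both directions.
-/

open Function

section InterferenceFunction

variable {ι : Type*} [Fintype ι]

lemma exists_forall_le_mul_and_eq_mul [Nonempty ι] {lam : ι → ℝ} (hlam : ∀ i, 0 < lam i)
    (lam' : ι → ℝ) : ∃ α j, (∀ i, lam' i ≤ α * lam i) ∧ lam' j = α * lam j := by
  obtain ⟨j, -, hj⟩ := Finset.exists_max_image Finset.univ (fun i => lam' i / lam i)
    Finset.univ_nonempty
  refine ⟨lam' j / lam j, j, fun i => ?_, (div_mul_cancel₀ _ (hlam j).ne').symm⟩
  exact (div_le_iff₀ (hlam i)).mp (hj i (Finset.mem_univ i))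

variable (F : (ι → ℝ) → ι → ℝ)

lemma le_of_isFixedPt_of_pos
    (hmono : ∀ lam lam' : ι → ℝ, (∀ i, 0 ≤ lam i) →
      (∀ i, lam i ≤ lam' i) → ∀ i, F lam i ≤ F lam' i)
    (hscale : ∀ (α : ℝ) (lam : ι → ℝ), 1 < α → (∀ i, 0 ≤ lam i) →
      ∀ i, F (α • lam) i < α * F lam i)
    {lam lam' : ι → ℝ} (hlam : ∀ i, 0 < lam i) (hlam' : ∀ i, 0 ≤ lam' i)
    (hfix : IsFixedPt F lam) (hfix' : IsFixedPt F lam') (i : ι) :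
    lam' i ≤ lam i := by
  by_contra! hlt
  have : Nonempty ι := ⟨i⟩
  obtain ⟨α, j, hle, heq⟩ := exists_forall_le_mul_and_eq_mul hlam lam'
  have hα : 1 < α := (lt_mul_iff_one_lt_left (hlam i)).mp (hlt.trans_le (hle i))
  refine lt_irrefl (lam' j) ?_
  calc lam' j = F lam' j := (congrFun hfix' j).symm
    _ ≤ F (α • lam) j := hmono lam' (α • lam) hlam' (by simpa using hle) j
    _ < α * F lam j := hscale α lam hα (fun i => (hlam i).le) j
    _ = lam' j := by rw [hfix, heq]

end InterferenceFunction

/-- A standard interference function (positive, monotone, scalable componentwise)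
has at most one fixed point. -/
theorem stmt_5 {M : ℕ} (F : (Fin M → ℝ) → (Fin M → ℝ))
    (hpos : ∀ lam : Fin M → ℝ, (∀ i, 0 ≤ lam i) → ∀ i, 0 < F lam i)
    (hmono : ∀ lam lam' : Fin M → ℝ, (∀ i, 0 ≤ lam i) →
      (∀ i, lam i ≤ lam' i) → ∀ i, F lam i ≤ F lam' i)
    (hscale : ∀ (α : ℝ) (lam : Fin M → ℝ), 1 < α → (∀ i, 0 ≤ lam i) →
      ∀ i, F (α • lam) i < α * F lam i)
    (lam lam' : Fin M → ℝ)
    (hlam : ∀ i, 0 ≤ lam i) (hlam' : ∀ i, 0 ≤ lam' i)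
    (hfix : F lam = lam) (hfix' : F lam' = lam') :
    lam = lam' := by
  have hpos_lam : ∀ i, 0 < lam i := fun i => hfix ▸ hpos lam hlam i
  have hpos_lam' : ∀ i, 0 < lam' i := fun i => hfix' ▸ hpos lam' hlam' i
  funext i
  exact le_antisymm (le_of_isFixedPt_of_pos F hmono hscale hpos_lam' hlam hfix' hfix i)
    (le_of_isFixedPt_of_pos F hmono hscale hpos_lam hlam' hfix hfix' i)
end

section
/- If a standard interference function F has a fixed point λ*, then the iteration λ^{(q+1)} = F(λ^{(q)}) started from λ^{(0)} = 0 produces a componentwise nondecreasing sequence bounded above by λ*, and hence converges. -/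
open Filter Topology

/-! The orbit of `0` stays in the nonnegative cone, where `F` is monotone. Since `0 ≤ F 0`,
monotonicity propagates `λ⁽⁰⁾ ≤ λ⁽¹⁾` to `λ⁽q⁾ ≤ λ⁽q+1⁾`, and `0 ≤ λ*` to `λ⁽q⁾ ≤ F λ* = λ*`.
A monotone sequence bounded above in `ℝ^M` converges to its supremum. -/

section Orbit

variable {α : Type*} {f : α → α} {s : Set α} {x : ℕ → α}

theorem orbit_mem_of_mapsTo (hx : ∀ n, x (n + 1) = f (x n)) (hs : Set.MapsTo f s s)
    (h0 : x 0 ∈ s) (n : ℕ) : x n ∈ s := by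
  induction n with
  | zero => exact h0
  | succ n ih => rw [hx]; exact hs ih

variable [Preorder α]

theorem orbit_monotone_of_monotoneOn (hx : ∀ n, x (n + 1) = f (x n)) (hf : MonotoneOn f s)
    (hmem : ∀ n, x n ∈ s) (h01 : x 0 ≤ x 1) : Monotone x := by
  refine monotone_nat_of_le_succ fun n => ?_
  induction n with
  | zero => exact h01
  | succ n ih => rw [hx, hx (n + 1)]; exact hf (hmem n) (hmem (n + 1)) ih

theorem orbit_le_fixedPoint_of_monotoneOn (hx : ∀ n, x (n + 1) = f (x n))
    (hf : MonotoneOn f s) (hmem : ∀ n, x n ∈ s) {p : α} (hp : p ∈ s) (hfix : f p = p)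
    (h0 : x 0 ≤ p) (n : ℕ) : x n ≤ p := by
  induction n with
  | zero => exact h0
  | succ n ih => rw [hx, ← hfix]; exact hf (hmem n) hp ih

end Orbit

theorem stmt_6_general {M : ℕ} (F : (Fin M → ℝ) → (Fin M → ℝ))
    (hpos : ∀ lam : Fin M → ℝ, (∀ i, 0 ≤ lam i) → ∀ i, 0 < F lam i)
    (hmono : ∀ lam lam' : Fin M → ℝ, (∀ i, 0 ≤ lam i) →
      (∀ i, lam i ≤ lam' i) → ∀ i, F lam i ≤ F lam' i)
    (lamStar : Fin M → ℝ) (hlamStar : ∀ i, 0 ≤ lamStar i)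
    (hfix : F lamStar = lamStar)
    (seq : ℕ → (Fin M → ℝ))
    (hseq0 : seq 0 = 0)
    (hseqS : ∀ q, seq (q + 1) = F (seq q)) :
    (∀ q i, seq q i ≤ seq (q + 1) i) ∧
    (∀ q i, seq q i ≤ lamStar i) ∧
    (∃ L : Fin M → ℝ, ∀ i, Tendsto (fun q => seq q i) atTop (𝓝 (L i))) := by
  have hF_mapsTo : Set.MapsTo F (Set.Ici 0) (Set.Ici 0) :=
    fun lam hlam i => (hpos lam hlam i).le
  have hF_mono : MonotoneOn F (Set.Ici 0) := fun lam hlam lam' _ hle => hmono lam lam' hlam hle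
  have hmem := orbit_mem_of_mapsTo hseqS hF_mapsTo (by simp [hseq0])
  have hseq_mono : Monotone seq := orbit_monotone_of_monotoneOn hseqS hF_mono hmem
    (by rw [hseqS, hseq0]; exact hF_mapsTo Set.self_mem_Ici)
  have hseq_le := orbit_le_fixedPoint_of_monotoneOn hseqS hF_mono hmem hlamStar hfix
    (hseq0 ▸ hlamStar)
  refine ⟨fun q => hseq_mono q.le_succ, hseq_le, ⨆ q, seq q, ?_⟩
  have hbdd : BddAbove (Set.range seq) := ⟨lamStar, Set.forall_mem_range.mpr hseq_le⟩
  exact tendsto_pi_nhds.mp (tendsto_atTop_ciSup hseq_mono hbdd)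

/-- If a standard interference function `F` has a fixed point `λ*`, the iteration
`λ^{(q+1)} = F(λ^{(q)})` started from `0` is componentwise nondecreasing, bounded
above by `λ*`, and hence converges (componentwise). -/
theorem stmt_6 {M : ℕ} (F : (Fin M → ℝ) → (Fin M → ℝ))
    (hpos : ∀ lam : Fin M → ℝ, (∀ i, 0 ≤ lam i) → ∀ i, 0 < F lam i)
    (hmono : ∀ lam lam' : Fin M → ℝ, (∀ i, 0 ≤ lam i) →
      (∀ i, lam i ≤ lam' i) → ∀ i, F lam i ≤ F lam' i)
    (hscale : ∀ (α : ℝ) (lam : Fin M → ℝ), 1 < α → (∀ i, 0 ≤ lam i) →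
      ∀ i, F (α • lam) i < α * F lam i)
    (lamStar : Fin M → ℝ) (hlamStar : ∀ i, 0 ≤ lamStar i)
    (hfix : F lamStar = lamStar)
    (seq : ℕ → (Fin M → ℝ))
    (hseq0 : seq 0 = 0)
    (hseqS : ∀ q, seq (q + 1) = F (seq q)) :
    (∀ q i, seq q i ≤ seq (q + 1) i) ∧
    (∀ q i, seq q i ≤ lamStar i) ∧
    (∃ L : Fin M → ℝ, ∀ i, Tendsto (fun q => seq q i) atTop (𝓝 (L i))) :=
  stmt_6_general F hpos hmono lamStar hlamStar hfix seq hseq0 hseqS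
end

section
/- For a Hermitian matrix of the form Ω = I + Σ_{j≠m} λ_j g_j g_j^H − (λ_m/γ) g_m g_m^H with all λ_j ≥ 0, γ > 0: Ω is positive semidefinite if and only if (λ_m/γ)·g_m^H (I + Σ_{j≠m} λ_j g_j g_j^H)^{-1} g_m ≤ 1. -/
/-!
Both conditions say that the Hermitian block matrix `[[A, v], [vᴴ, 1]]` is positive semidefinite,
where `A = I + Σ_{j≠m} λ_j g_j g_jᴴ` is positive definite and `v = √(λ_m/γ) g_m`: its Schur complement
with respect to the `1` block is `A - v vᴴ`, and with respect to `A` it is the `1 × 1` matrix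
`1 - vᴴ A⁻¹ v`.
-/

open Matrix Finset
open scoped ComplexOrder

namespace Matrix

variable {n : Type*} [Fintype n]

theorem posSemidef_sub_vecMulVec_iff {R : Type*} [Field R] [PartialOrder R] [StarRing R]
    [StarOrderedRing R] [DecidableEq n] {A : Matrix n n R} (hA : A.PosDef) (v : n → R) :
    (A - vecMulVec v (star v)).PosSemidef ↔ star v ⬝ᵥ A⁻¹ *ᵥ v ≤ 1 := by
  have : Invertible A := hA.isUnit.invertible
  have : Invertible (1 : Matrix Unit Unit R) := invertibleOne
  set B := replicateCol Unit v
  have hB : vecMulVec v (star v) = B * (1 : Matrix Unit Unit R)⁻¹ * Bᴴ := by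
    simp [B, vecMulVec_eq Unit, conjTranspose_replicateCol]
  have hschur : 1 - Bᴴ * A⁻¹ * B = diagonal fun _ ↦ 1 - star v ⬝ᵥ A⁻¹ *ᵥ v := by
    ext i j
    rw [sub_apply, conjTranspose_replicateCol, Matrix.mul_assoc, ← replicateCol_mulVec,
      replicateRow_mul_replicateCol_apply]
    simp
  rw [hB, ← PosDef.fromBlocks₂₂ A B PosDef.one, PosDef.fromBlocks₁₁ B 1 hA, hschur,
    posSemidef_diagonal_iff]
  simp

variable {𝕜 : Type*} [RCLike 𝕜]

theorem posSemidef_sub_smul_vecMulVec_iff [DecidableEq n] {A : Matrix n n 𝕜} (hA : A.PosDef)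
    {c : ℝ} (hc : 0 ≤ c) (v : n → 𝕜) :
    (A - c • vecMulVec v (star v)).PosSemidef ↔ c * RCLike.re (star v ⬝ᵥ A⁻¹ *ᵥ v) ≤ 1 := by
  set w : n → 𝕜 := (√c : 𝕜) • v
  have hsq : (√c : 𝕜) * √c = c := by rw [← RCLike.ofReal_mul, Real.mul_self_sqrt hc]
  have hstar : star w = (√c : 𝕜) • star v := by simp [w, star_smul]
  have hw : c • vecMulVec v (star v) = vecMulVec w (star w) := by
    rw [hstar, vecMulVec_smul, smul_vecMulVec, smul_smul, hsq,
      RCLike.real_smul_eq_coe_smul (K := 𝕜)]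
  have hwq : star w ⬝ᵥ A⁻¹ *ᵥ w = c • (star v ⬝ᵥ A⁻¹ *ᵥ v) := by
    rw [hstar, mulVec_smul, smul_dotProduct, dotProduct_smul, smul_smul, hsq,
      RCLike.real_smul_eq_coe_smul (K := 𝕜)]
  have hq : 0 ≤ star v ⬝ᵥ A⁻¹ *ᵥ v := hA.inv.posSemidef.dotProduct_mulVec_nonneg v
  rw [hw, posSemidef_sub_vecMulVec_iff hA, hwq, RCLike.le_iff_re_im]
  simp [RCLike.smul_re, RCLike.smul_im, (RCLike.nonneg_iff.mp hq).2]

theorem posSemidef_sum_smul_vecMulVec {ι : Type*} (s : Finset ι) (v : ι → n → 𝕜) {c : ι → ℝ}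
    (hc : ∀ i ∈ s, 0 ≤ c i) : (∑ i ∈ s, c i • vecMulVec (v i) (star (v i))).PosSemidef :=
  posSemidef_sum s fun i hi ↦ (posSemidef_vecMulVec_self_star (v i)).smul (hc i hi)

end Matrix

/-- Rank-one-update PSD criterion for
`Ω = I + Σ_{j≠m} λ_j g_j g_jᴴ − (λ_m/γ) g_m g_mᴴ`:
`Ω ⪰ 0` iff `(λ_m/γ)·g_mᴴ (I + Σ_{j≠m} λ_j g_j g_jᴴ)⁻¹ g_m ≤ 1`. -/
theorem stmt_7 {n M : ℕ} (m : Fin M) (g : Fin M → Fin n → ℂ)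
    (lam : Fin M → ℝ) (hlam : ∀ j, 0 ≤ lam j) (γ : ℝ) (hγ : 0 < γ) :
    (1 + ∑ j ∈ Finset.univ.erase m, lam j • Matrix.vecMulVec (g j) (star (g j))
        - (lam m / γ) • Matrix.vecMulVec (g m) (star (g m))).PosSemidef ↔
    (lam m / γ) *
      (star (g m) ⬝ᵥ
        ((1 + ∑ j ∈ Finset.univ.erase m,
            lam j • Matrix.vecMulVec (g j) (star (g j)))⁻¹ *ᵥ g m)).re ≤ 1 :=
  posSemidef_sub_smul_vecMulVec_iff
    (PosDef.one.add_posSemidef (posSemidef_sum_smul_vecMulVec _ g fun j _ ↦ hlam j))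
    (div_nonneg (hlam m) hγ.le) (g m)
end

section
/- For A Hermitian positive definite and v ∈ ℂ^n, the matrix A − v v^H is positive semidefinite but not positive definite (i.e., singular and PSD) if and only if v^H A^{-1} v = 1. -/
/-!
Let `A w = v` and `c = vᴴ w = wᴴ A w ≥ 0`. Completing the square,
`xᴴ (A - v vᴴ) x = yᴴ A y + (1 - c) |vᴴ x|²` with `y = x - (vᴴ x) w`,
while at `x = w` the form equals `c (1 - c)`. Hence `A - v vᴴ` is positive semidefinite iff
`c ≤ 1` and positive definite iff `c < 1`, so it is singular and positive semidefinite exactly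
when `c = 1`.
-/

open Matrix
open scoped ComplexOrder

namespace Matrix

variable {𝕜 ι : Type*} [RCLike 𝕜] [Fintype ι] {A : Matrix ι ι 𝕜} {v w : ι → 𝕜}

theorem star_dotProduct_sub_vecMulVec_mulVec (A : Matrix ι ι 𝕜) (v x : ι → 𝕜) :
    star x ⬝ᵥ (A - vecMulVec v (star v)) *ᵥ x =
      star x ⬝ᵥ A *ᵥ x - star (star v ⬝ᵥ x) * (star v ⬝ᵥ x) := by
  rw [sub_mulVec, dotProduct_sub, vecMulVec_mulVec, dotProduct_smul, star_dotProduct x v]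
  simp [mul_comm]

theorem IsHermitian.star_dotProduct_mulVec_eq (hA : A.IsHermitian) (hw : A *ᵥ w = v)
    (x : ι → 𝕜) :
    star w ⬝ᵥ A *ᵥ x = star v ⬝ᵥ x := by
  rw [dotProduct_mulVec, ← hw, star_mulVec, hA.eq]

theorem IsHermitian.star_dotProduct_sub_vecMulVec_mulVec_eq_add (hA : A.IsHermitian)
    (hw : A *ᵥ w = v) (x : ι → 𝕜) :
    star x ⬝ᵥ (A - vecMulVec v (star v)) *ᵥ x =
      star (x - (star v ⬝ᵥ x) • w) ⬝ᵥ A *ᵥ (x - (star v ⬝ᵥ x) • w) +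
        (1 - star w ⬝ᵥ v) * (star (star v ⬝ᵥ x) * (star v ⬝ᵥ x)) := by
  rw [star_dotProduct_sub_vecMulVec_mulVec]
  simp only [star_sub, star_smul, mulVec_sub, mulVec_smul, hw, dotProduct_sub, sub_dotProduct,
    dotProduct_smul, smul_dotProduct, hA.star_dotProduct_mulVec_eq hw, star_dotProduct x v,
    smul_eq_mul]
  ring

theorem PosSemidef.star_dotProduct_nonneg (hA : A.PosSemidef) (hw : A *ᵥ w = v) :
    0 ≤ star v ⬝ᵥ w := by
  rw [← hA.isHermitian.star_dotProduct_mulVec_eq hw]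
  exact hA.dotProduct_mulVec_nonneg w

theorem PosDef.posSemidef_sub_vecMulVec_iff (hA : A.PosDef) (hw : A *ᵥ w = v) :
    (A - vecMulVec v (star v)).PosSemidef ↔ RCLike.re (star v ⬝ᵥ w) ≤ 1 := by
  obtain ⟨r, hr, hc⟩ :=
    RCLike.nonneg_iff_exists_ofReal.1 (hA.posSemidef.star_dotProduct_nonneg hw)
  rw [← hc, RCLike.ofReal_re]
  constructor
  · intro h
    have hq := h.dotProduct_mulVec_nonneg w
    rw [star_dotProduct_sub_vecMulVec_mulVec, hA.isHermitian.star_dotProduct_mulVec_eq hw, ← hc,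
      RCLike.star_def, RCLike.conj_ofReal, ← RCLike.ofReal_mul, ← RCLike.ofReal_sub,
      RCLike.ofReal_nonneg] at hq
    nlinarith
  · intro h
    refine .of_dotProduct_mulVec_nonneg
      (hA.isHermitian.sub (posSemidef_vecMulVec_self_star v).isHermitian) fun x => ?_
    rw [hA.isHermitian.star_dotProduct_sub_vecMulVec_mulVec_eq_add hw, star_dotProduct w v, ← hc,
      RCLike.star_def, RCLike.conj_ofReal]
    exact add_nonneg (hA.posSemidef.dotProduct_mulVec_nonneg _)
      (mul_nonneg (by exact_mod_cast sub_nonneg.2 h) (star_mul_self_nonneg _))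

theorem PosDef.posDef_sub_vecMulVec_iff (hA : A.PosDef) (hw : A *ᵥ w = v) :
    (A - vecMulVec v (star v)).PosDef ↔ RCLike.re (star v ⬝ᵥ w) < 1 := by
  obtain ⟨r, hr, hc⟩ :=
    RCLike.nonneg_iff_exists_ofReal.1 (hA.posSemidef.star_dotProduct_nonneg hw)
  rw [← hc, RCLike.ofReal_re]
  constructor
  · intro h
    rcases eq_or_ne w 0 with rfl | hw0
    · subst hw
      simp only [mulVec_zero, star_zero, zero_dotProduct, RCLike.ofReal_eq_zero] at hc
      linarith
    have hpos := hA.dotProduct_mulVec_pos hw0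
    have hq := h.dotProduct_mulVec_pos hw0
    rw [hA.isHermitian.star_dotProduct_mulVec_eq hw, ← hc, RCLike.ofReal_pos] at hpos
    rw [star_dotProduct_sub_vecMulVec_mulVec, hA.isHermitian.star_dotProduct_mulVec_eq hw, ← hc,
      RCLike.star_def, RCLike.conj_ofReal, ← RCLike.ofReal_mul, ← RCLike.ofReal_sub,
      RCLike.ofReal_pos] at hq
    nlinarith
  · intro h
    refine .of_dotProduct_mulVec_pos
      (hA.isHermitian.sub (posSemidef_vecMulVec_self_star v).isHermitian) fun x hx => ?_
    rw [hA.isHermitian.star_dotProduct_sub_vecMulVec_mulVec_eq_add hw, star_dotProduct w v, ← hc,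
      RCLike.star_def, RCLike.conj_ofReal]
    rcases eq_or_ne (star v ⬝ᵥ x) 0 with ht | ht
    · simpa [ht] using hA.dotProduct_mulVec_pos hx
    · exact add_pos_of_nonneg_of_pos (hA.posSemidef.dotProduct_mulVec_nonneg _)
        (mul_pos (by exact_mod_cast sub_pos.2 h) (star_mul_self_pos (.of_ne_zero ht)))

end Matrix

/-- For Hermitian positive definite `A` and `v ∈ ℂⁿ`, `A − v vᴴ` is positive
semidefinite but not positive definite iff `vᴴ A⁻¹ v = 1`. -/
theorem stmt_8 {n : ℕ} (A : Matrix (Fin n) (Fin n) ℂ) (hA : A.PosDef)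
    (v : Fin n → ℂ) :
    ((A - Matrix.vecMulVec v (star v)).PosSemidef ∧
      ¬ (A - Matrix.vecMulVec v (star v)).PosDef) ↔
    (star v ⬝ᵥ (A⁻¹ *ᵥ v)).re = 1 := by
  have hw : A *ᵥ (A⁻¹ *ᵥ v) = v := by
    rw [mulVec_mulVec, mul_nonsing_inv A (A.isUnit_iff_isUnit_det.mp hA.isUnit), one_mulVec]
  rw [hA.posSemidef_sub_vecMulVec_iff hw, hA.posDef_sub_vecMulVec_iff hw, not_lt]
  exact le_antisymm_iff.symm
end
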